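/- arXiv:2101.00426 — 4 statements merged into one kernel-verified Lean document; each statement's English description precedes it below -/
import Mathlib

section
/- Let φ₁ < φ₂ < φ₃ < φ₄ with φ₄ − φ₁ < 2π, and let x = s₁e^{iφ} with arg x ∈ [φ₁, φ₂], y = s₂e^{iψ} with arg y ∈ [φ₃, φ₄], where s₁, s₂ ≥ 0. Then the Euclidean distance satisfies d(x, y) ≥ c·√(s₁² + s₂²), where c = √(1 − max{cos(φ₃ − φ₂), cos(φ₄ − φ₁), 0}). -/
/-!
Writing `θ = ψ - φ ∈ [φ₃ - φ₂, φ₄ - φ₁] ⊆ [0, 2π]`, the law of cosines gives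
`d(x, y)² = s₁² + s₂² - 2 s₁ s₂ cos θ`. Since cosine decreases on `[0, π]` and increases on
`[π, 2π]`, `cos θ ≤ M := max {cos(φ₃ - φ₂), cos(φ₄ - φ₁), 0}`, and `2 s₁ s₂ ≤ s₁² + s₂²` with
`M ≥ 0` then yields `d(x, y)² ≥ (1 - M)(s₁² + s₂²)`.
-/

open Real

theorem Real.cos_le_max_of_mem_Icc {a b θ : ℝ} (ha : 0 ≤ a) (hb : b ≤ 2 * π)
    (hθ : θ ∈ Set.Icc a b) : cos θ ≤ max (cos a) (cos b) := by
  obtain ⟨haθ, hθb⟩ := hθ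
  rcases le_total θ π with hθπ | hπθ
  · exact (cos_le_cos_of_nonneg_of_le_pi ha hθπ haθ).trans (le_max_left _ _)
  · have h : cos (2 * π - θ) ≤ cos (2 * π - b) :=
      cos_le_cos_of_nonneg_of_le_pi (by linarith) (by linarith) (by linarith)
    rw [cos_two_pi_sub, cos_two_pi_sub] at h
    exact h.trans (le_max_right _ _)

theorem Complex.norm_ofReal_mul_exp_sub_sq (r s φ ψ : ℝ) :
    ‖(r : ℂ) * Complex.exp (φ * Complex.I) - (s : ℂ) * Complex.exp (ψ * Complex.I)‖ ^ 2
      = r ^ 2 + s ^ 2 - 2 * r * s * Real.cos (ψ - φ) := by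
  rw [Complex.sq_norm, Complex.exp_mul_I, Complex.exp_mul_I]
  simp only [Complex.normSq_apply, Complex.sub_re, Complex.sub_im, Complex.re_ofReal_mul,
    Complex.im_ofReal_mul, Complex.add_re, Complex.add_im, Complex.mul_I_re, Complex.mul_I_im,
    ← Complex.ofReal_cos, ← Complex.ofReal_sin, Complex.ofReal_re, Complex.ofReal_im, Real.cos_sub]
  linear_combination r ^ 2 * Real.sin_sq_add_cos_sq φ + s ^ 2 * Real.sin_sq_add_cos_sq ψ

theorem Complex.sqrt_one_sub_mul_sqrt_le_norm_ofReal_mul_exp_sub {r s φ ψ M : ℝ}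
    (hr : 0 ≤ r) (hs : 0 ≤ s) (hM : 0 ≤ M) (hcos : Real.cos (ψ - φ) ≤ M) :
    √(1 - M) * √(r ^ 2 + s ^ 2)
      ≤ ‖(r : ℂ) * Complex.exp (φ * Complex.I) - (s : ℂ) * Complex.exp (ψ * Complex.I)‖ := by
  rw [← sqrt_mul' _ (by positivity), ← sqrt_sq (norm_nonneg _),
    Complex.norm_ofReal_mul_exp_sub_sq]
  apply sqrt_le_sqrt
  nlinarith [sq_nonneg (r - s), mul_nonneg hr hs]

theorem stmt2_general (φ₁ φ₂ φ₃ φ₄ φ ψ s₁ s₂ : ℝ)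
    (h23 : φ₂ < φ₃) (h41 : φ₄ - φ₁ < 2 * Real.pi)
    (hs₁ : 0 ≤ s₁) (hs₂ : 0 ≤ s₂)
    (hφ : φ ∈ Set.Icc φ₁ φ₂) (hψ : ψ ∈ Set.Icc φ₃ φ₄) :
    Real.sqrt (1 - max (max (Real.cos (φ₃ - φ₂)) (Real.cos (φ₄ - φ₁))) 0) *
      Real.sqrt (s₁ ^ 2 + s₂ ^ 2)
      ≤ ‖((s₁ : ℂ) * Complex.exp ((φ : ℂ) * Complex.I)
          - (s₂ : ℂ) * Complex.exp ((ψ : ℂ) * Complex.I))‖ := by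
  have hθ : ψ - φ ∈ Set.Icc (φ₃ - φ₂) (φ₄ - φ₁) :=
    ⟨by linarith [hφ.2, hψ.1], by linarith [hφ.1, hψ.2]⟩
  have hcos := cos_le_max_of_mem_Icc (by linarith) h41.le hθ
  exact Complex.sqrt_one_sub_mul_sqrt_le_norm_ofReal_mul_exp_sub hs₁ hs₂ (le_max_right _ _)
    (hcos.trans (le_max_left _ _))

/-- Distance lower bound between points in disjoint angular sectors:
if `arg x ∈ [φ₁, φ₂]` and `arg y ∈ [φ₃, φ₄]` with `φ₁ < φ₂ < φ₃ < φ₄`, `φ₄ - φ₁ < 2π`,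
then `d(x,y) ≥ c √(s₁² + s₂²)` with
`c = √(1 − max{cos(φ₃ − φ₂), cos(φ₄ − φ₁), 0})`. -/
theorem stmt2 (φ₁ φ₂ φ₃ φ₄ φ ψ s₁ s₂ : ℝ)
    (h12 : φ₁ < φ₂) (h23 : φ₂ < φ₃) (h34 : φ₃ < φ₄) (h41 : φ₄ - φ₁ < 2 * Real.pi)
    (hs₁ : 0 ≤ s₁) (hs₂ : 0 ≤ s₂)
    (hφ : φ ∈ Set.Icc φ₁ φ₂) (hψ : ψ ∈ Set.Icc φ₃ φ₄) :
    Real.sqrt (1 - max (max (Real.cos (φ₃ - φ₂)) (Real.cos (φ₄ - φ₁))) 0) *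
      Real.sqrt (s₁ ^ 2 + s₂ ^ 2)
      ≤ ‖((s₁ : ℂ) * Complex.exp ((φ : ℂ) * Complex.I)
          - (s₂ : ℂ) * Complex.exp ((ψ : ℂ) * Complex.I))‖ :=
  stmt2_general φ₁ φ₂ φ₃ φ₄ φ ψ s₁ s₂ h23 h41 hs₁ hs₂ hφ hψ
end

section
/- Let G be a group, 𝓑 a unital C*-algebra with trivial center, γ̂_g automorphisms of 𝓑 and v(g,h) ∈ 𝓑 unitaries with γ̂_g γ̂_h = Ad(v(g,h)) γ̂_{gh}. Define c(g,h,k) ∈ 𝕋 by v(g,h)v(gh,k) = c(g,h,k)·γ̂_g(v(h,k))·v(g,hk). Then c satisfies the 3-cocycle identity: c(g,h,k)·c(g,hk,f)·c(h,k,f) = c(g,h,kf)·c(gh,k,f) for all g,h,k,f ∈ G. -/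
/-!
Expand the unitary `v(g,h) v(gh,k) v(ghk,f)` in the two ways allowed by associativity.
Reducing the left pair first uses the defining relation of `c` three times and yields
`c(g,h,k) c(g,hk,f) c(h,k,f) • X`; reducing the right pair first and moving `v(g,h)` past
`γ̂_{gh}` with `Ad(v(g,h)) γ̂_{gh} = γ̂_g γ̂_h` yields `c(g,h,kf) c(gh,k,f) • X`, for the same
unitary `X = γ̂_g(γ̂_h(v(k,f))) γ̂_g(v(h,kf)) v(g,hkf)`. A unitary of a nontrivial algebra is
nonzero, so the two scalars agree.
-/

theorem mul_eq_mul_of_eq_mul_mul_star {M : Type*} [Monoid M] [StarMul M] {u a b : M}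
    (hu : u ∈ unitary M) (h : a = u * b * star u) : u * b = a * u := by
  rw [h, mul_assoc, Unitary.star_mul_self_of_mem hu, mul_one]

section CocycleAction

variable {G R B : Type*} [Group G] [CommSemiring R] [Semiring B] [StarMul B] [Algebra R B]
  {v : G → G → B} {γ : G → B ≃⋆ₐ[R] B} {c : G → G → G → R}

theorem triple_product_eq_smul_of_left_first
    (hdef : ∀ g h k, v g h * v (g * h) k = c g h k • (γ g (v h k) * v g (h * k)))
    (g h k f : G) :
    v g h * v (g * h) k * v (g * h * k) f =
      (c g h k * c g (h * k) f * c h k f) •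
        (γ g (γ h (v k f)) * γ g (v h (k * f)) * v g (h * (k * f))) :=
  calc v g h * v (g * h) k * v (g * h * k) f
      = c g h k • (γ g (v h k) * (v g (h * k) * v (g * (h * k)) f)) := by
        rw [hdef, smul_mul_assoc, mul_assoc, mul_assoc g h k]
    _ = (c g h k * c g (h * k) f) • (γ g (v h k * v (h * k) f) * v g (h * k * f)) := by
        rw [hdef, mul_smul_comm, smul_smul, map_mul, ← mul_assoc]
    _ = (c g h k * c g (h * k) f * c h k f) •
          (γ g (γ h (v k f)) * γ g (v h (k * f)) * v g (h * (k * f))) := by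
        rw [hdef, map_smul, smul_mul_assoc, smul_smul, map_mul, mul_assoc h k f]

theorem triple_product_eq_smul_of_right_first
    (hdef : ∀ g h k, v g h * v (g * h) k = c g h k • (γ g (v h k) * v g (h * k)))
    (hswap : ∀ g h x, v g h * γ (g * h) x = γ g (γ h x) * v g h)
    (g h k f : G) :
    v g h * v (g * h) k * v (g * h * k) f =
      (c g h (k * f) * c (g * h) k f) •
        (γ g (γ h (v k f)) * γ g (v h (k * f)) * v g (h * (k * f))) :=
  calc v g h * v (g * h) k * v (g * h * k) f
      = c (g * h) k f • (v g h * γ (g * h) (v k f) * v (g * h) (k * f)) := by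
        rw [mul_assoc, hdef, mul_smul_comm, mul_assoc]
    _ = c (g * h) k f • (γ g (γ h (v k f)) * (v g h * v (g * h) (k * f))) := by
        rw [hswap, mul_assoc]
    _ = (c g h (k * f) * c (g * h) k f) •
          (γ g (γ h (v k f)) * γ g (v h (k * f)) * v g (h * (k * f))) := by
        rw [hdef, mul_smul_comm, smul_smul, mul_comm (c g h (k * f)), mul_assoc]

end CocycleAction

theorem stmt7_general {G : Type*} [Group G]
    {B : Type*} [NormedRing B] [StarRing B]
    [NormedAlgebra ℂ B] [Nontrivial B]
    (v : G → G → B) (hv : ∀ g h, v g h ∈ unitary B)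
    (γ : G → B ≃⋆ₐ[ℂ] B)
    (hrel : ∀ g h x, γ g (γ h x) = v g h * γ (g * h) x * star (v g h))
    (c : G → G → G → ℂ)
    (hdef : ∀ g h k, v g h * v (g * h) k = c g h k • (γ g (v h k) * v g (h * k))) :
    ∀ g h k f : G,
      c g h k * c g (h * k) f * c h k f = c g h (k * f) * c (g * h) k f := by
  intro g h k f
  have hswap : ∀ g h x, v g h * γ (g * h) x = γ g (γ h x) * v g h := fun g h x =>
    mul_eq_mul_of_eq_mul_mul_star (hv g h) (hrel g h x)
  have hX : γ g (γ h (v k f)) * γ g (v h (k * f)) * v g (h * (k * f)) ∈ unitary B :=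
    mul_mem (mul_mem (Unitary.map_mem _ (Unitary.map_mem _ (hv k f)))
      (Unitary.map_mem _ (hv h _))) (hv g _)
  refine smul_left_injective ℂ (Unitary.isUnit_coe (U := ⟨_, hX⟩)).ne_zero ?_
  exact (triple_product_eq_smul_of_left_first hdef g h k f).symm.trans
    (triple_product_eq_smul_of_right_first hdef hswap g h k f)

/-- The scalars `c(g,h,k)` attached to a cocycle action of `G` on a unital C*-algebra
with trivial center satisfy the 3-cocycle identity
`c(g,h,k)·c(g,hk,f)·c(h,k,f) = c(g,h,kf)·c(gh,k,f)`. -/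
theorem stmt7 {G : Type*} [Group G]
    {B : Type*} [NormedRing B] [StarRing B] [CStarRing B] [CompleteSpace B]
    [NormedAlgebra ℂ B] [StarModule ℂ B] [Nontrivial B]
    (hcenter : ∀ x : B, (∀ y : B, x * y = y * x) → ∃ z : ℂ, x = z • (1 : B))
    (v : G → G → B) (hv : ∀ g h, v g h ∈ unitary B)
    (γ : G → B ≃⋆ₐ[ℂ] B)
    (hrel : ∀ g h x, γ g (γ h x) = v g h * γ (g * h) x * star (v g h))
    (c : G → G → G → ℂ) (hc : ∀ g h k, ‖c g h k‖ = 1)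
    (hdef : ∀ g h k, v g h * v (g * h) k = c g h k • (γ g (v h k) * v g (h * k))) :
    ∀ g h k f : G,
      c g h k * c g (h * k) f * c h k f = c g h (k * f) * c (g * h) k f :=
  stmt7_general v hv γ hrel c hdef
end

section
/- Let H be a Hilbert space decomposed as H = H_L ⊗ H_R, and let u(g,h) ∈ U(H_R) for g,h in a group G, with W_g ∈ U(H) for g ∈ G, satisfying: (a) each Ad(W_g)(1 ⊗ u(h,k)) ∈ ℂ1 ⊗ B(H_R), (b) Ad(W_g W_h) = Ad((1 ⊗ u(g,h)) W_{gh}) on B(H), and (c) 1 ⊗ u(g,h)u(gh,k) = c(g,h,k)·(W_g(1 ⊗ u(h,k))W_g*)·(1 ⊗ u(g,hk)) for some c: G³ → 𝕋. Then c is a 3-cocycle: c(g,h,k)c(g,hk,f)c(h,k,f) = c(g,h,kf)c(gh,k,f) for all g,h,k,f ∈ G. -/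
/-!
Expand `u(g,h) u(gh,k) u(ghk,f)` with (c) in two ways: directly from the left, and after
first expanding `u(gh,k) u(ghk,f)`, which requires moving `u(g,h)` past `Ad(W_{gh})` by (b).
Both expansions are scalar multiples of the same unitary `Ad(W_g)(u(h,k) u(hk,f)) u(g,hkf)`,
so the scalars agree.
-/

section TwistedAction

variable {K R G F : Type*} [CommSemiring K] [Semiring R] [Algebra K R] [Group G]
  [FunLike F R R] [AlgHomClass F K R R]
  {α : G → F} {U : G → G → R} {c : G → G → G → K}

theorem mul_mul_eq_smul_of_twisted_cocycle
    (hU : ∀ g h k, U g h * U (g * h) k = c g h k • (α g (U h k) * U g (h * k))) (g h k f : G) :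
    U g h * U (g * h) k * U (g * h * k) f =
      (c g h k * c g (h * k) f) • (α g (U h k * U (h * k) f) * U g (h * k * f)) := by
  rw [hU, smul_mul_assoc, mul_assoc, mul_assoc g h k, hU, mul_smul_comm, smul_smul, map_mul,
    mul_assoc (α g (U h k))]

theorem smul_mul_mul_eq_smul_of_twisted_cocycle
    (htwist : ∀ g h y, U g h * α (g * h) y = α g (α h y) * U g h)
    (hU : ∀ g h k, U g h * U (g * h) k = c g h k • (α g (U h k) * U g (h * k))) (g h k f : G) :
    c h k f • (U g h * U (g * h) k * U (g * h * k) f) =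
      (c g h (k * f) * c (g * h) k f) • (α g (U h k * U (h * k) f) * U g (h * k * f)) := by
  calc c h k f • (U g h * U (g * h) k * U (g * h * k) f)
      = (c h k f * c (g * h) k f) • (U g h * α (g * h) (U k f) * U (g * h) (k * f)) := by
        rw [mul_assoc, hU, mul_smul_comm, smul_smul, mul_assoc]
    _ = (c h k f * c (g * h) k f) • (α g (α h (U k f)) * (U g h * U (g * h) (k * f))) := by
        rw [htwist, mul_assoc]
    _ = (c h k f * c (g * h) k f * c g h (k * f)) •
          (α g (α h (U k f)) * α g (U h (k * f)) * U g (h * (k * f))) := by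
        rw [hU, mul_smul_comm, smul_smul, ← mul_assoc]
    _ = (c (g * h) k f * c g h (k * f)) •
          (α g (c h k f • (α h (U k f) * U h (k * f))) * U g (h * (k * f))) := by
        rw [map_smul, map_mul, smul_mul_assoc, smul_smul, mul_rotate]
    _ = _ := by
        rw [← hU, mul_assoc h k f, mul_comm (c (g * h) k f)]

theorem smul_eq_smul_of_twisted_cocycle
    (htwist : ∀ g h y, U g h * α (g * h) y = α g (α h y) * U g h)
    (hU : ∀ g h k, U g h * U (g * h) k = c g h k • (α g (U h k) * U g (h * k))) (g h k f : G) :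
    (c g h k * c g (h * k) f * c h k f) • (α g (U h k * U (h * k) f) * U g (h * k * f)) =
      (c g h (k * f) * c (g * h) k f) • (α g (U h k * U (h * k) f) * U g (h * k * f)) := by
  rw [mul_comm, ← smul_smul, ← mul_mul_eq_smul_of_twisted_cocycle hU,
    smul_mul_mul_eq_smul_of_twisted_cocycle htwist hU]

end TwistedAction

theorem Unitary.mul_conj_eq_conj_mul_of_conj_eq {R : Type*} [Monoid R] [StarMul R] {a v w : R}
    (hv : v ∈ unitary R) {y : R} (h : a * y * star a = v * w * y * star (v * w)) :
    v * (w * y * star w) = a * y * star a * v := by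
  rw [h, star_mul]
  simp only [mul_assoc, Unitary.star_mul_self_of_mem hv, mul_one]

/-- `ℂ1 ⊗ B(H_R)` is modelled as the range of the unital *-embedding `ι : B(H_R) → B(H)`. -/
theorem stmt10_general {G : Type*} [Group G]
    {H HR : Type*}
    [NormedAddCommGroup H] [InnerProductSpace ℂ H] [CompleteSpace H]
    [NormedAddCommGroup HR] [InnerProductSpace ℂ HR] [CompleteSpace HR]
    [Nontrivial HR]
    (ι : (HR →L[ℂ] HR) →⋆ₐ[ℂ] (H →L[ℂ] H)) (hι : Function.Injective ι)
    (u : G → G → HR →L[ℂ] HR) (hu : ∀ g h, u g h ∈ unitary (HR →L[ℂ] HR))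
    (W : G → H →L[ℂ] H) (hW : ∀ g, W g ∈ unitary (H →L[ℂ] H))
    (c : G → G → G → ℂ)
    (hb : ∀ (g h : G) (A : H →L[ℂ] H),
      (W g * W h) * A * star (W g * W h)
        = (ι (u g h) * W (g * h)) * A * star (ι (u g h) * W (g * h)))
    (hcrel : ∀ g h k : G,
      ι (u g h * u (g * h) k)
        = c g h k • ((W g * ι (u h k) * star (W g)) * ι (u g (h * k)))) :
    ∀ g h k f : G,
      c g h k * c g (h * k) f * c h k f = c g h (k * f) * c (g * h) k f := by
  intro g h k f
  have : Nontrivial (H →L[ℂ] H) := hι.nontrivial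
  let α : G → (H →L[ℂ] H) ≃⋆ₐ[ℂ] (H →L[ℂ] H) := fun g ↦ Unitary.conjStarAlgAut ℂ _ ⟨W g, hW g⟩
  have htwist : ∀ g h y, ι (u g h) * α (g * h) y = α g (α h y) * ι (u g h) := fun g h y ↦ by
    simpa [α, star_mul, mul_assoc] using
      Unitary.mul_conj_eq_conj_mul_of_conj_eq (Unitary.map_mem ι (hu g h)) (hb g h y)
  have hX : α g (ι (u h k) * ι (u (h * k) f)) * ι (u g (h * k * f)) ∈ unitary (H →L[ℂ] H) :=
    mul_mem (Unitary.map_mem _ <|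
        mul_mem (Unitary.map_mem ι (hu h k)) (Unitary.map_mem ι (hu (h * k) f)))
      (Unitary.map_mem ι (hu g (h * k * f)))
  refine smul_left_injective ℂ (Unitary.isUnit_coe (U := ⟨_, hX⟩)).ne_zero ?_
  exact smul_eq_smul_of_twisted_cocycle htwist (fun g h k ↦ by rw [← map_mul]; exact hcrel g h k)
    g h k f

/-- Cocycle identity for the scalars associated to unitaries on `H = H_L ⊗ H_R`:
the factor `ℂ1 ⊗ B(H_R)` is represented by the range of a unital *-embedding
`ι : B(H_R) → B(H)`.  If (a) `Ad(W_g)` maps `1 ⊗ u(h,k)` into `ℂ1 ⊗ B(H_R)`,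
(b) `Ad(W_g W_h) = Ad((1 ⊗ u(g,h)) W_{gh})`, and
(c) `1 ⊗ u(g,h)u(gh,k) = c(g,h,k)·Ad(W_g)(1 ⊗ u(h,k))·(1 ⊗ u(g,hk))`,
then `c` is a 3-cocycle. -/
theorem stmt10 {G : Type*} [Group G]
    {H HR : Type*}
    [NormedAddCommGroup H] [InnerProductSpace ℂ H] [CompleteSpace H]
    [NormedAddCommGroup HR] [InnerProductSpace ℂ HR] [CompleteSpace HR]
    [Nontrivial HR]
    (ι : (HR →L[ℂ] HR) →⋆ₐ[ℂ] (H →L[ℂ] H)) (hι : Function.Injective ι)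
    (u : G → G → HR →L[ℂ] HR) (hu : ∀ g h, u g h ∈ unitary (HR →L[ℂ] HR))
    (W : G → H →L[ℂ] H) (hW : ∀ g, W g ∈ unitary (H →L[ℂ] H))
    (c : G → G → G → ℂ) (hc : ∀ g h k, ‖c g h k‖ = 1)
    (ha : ∀ g h k : G, ∃ x : HR →L[ℂ] HR,
      W g * ι (u h k) * star (W g) = ι x)
    (hb : ∀ (g h : G) (A : H →L[ℂ] H),
      (W g * W h) * A * star (W g * W h)
        = (ι (u g h) * W (g * h)) * A * star (ι (u g h) * W (g * h)))
    (hcrel : ∀ g h k : G,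
      ι (u g h * u (g * h) k)
        = c g h k • ((W g * ι (u h k) * star (W g)) * ι (u g (h * k)))) :
    ∀ g h k f : G,
      c g h k * c g (h * k) f * c h k f = c g h (k * f) * c (g * h) k f :=
  stmt10_general ι hι u hu W hW c hb hcrel
end

section
/- Let F: [0,∞) → (0,∞) be non-increasing with κ_{1,2} = Σ_{l=0}^∞ (l+1)²F(l) < ∞. Then for every m ∈ ℤ_{≥0} and 0 < c ≤ 1: Σ_{r₁=0}^∞ Σ over nonnegative integers r with √(r² + r₁²)·c ≥ m+1 of (r₁+1)·F(√(r² + r₁²)·c − (m+1)) ≤ (3/c)²·(2√2 + 1/c)²·π·(m+1)²·κ_{1,2}. -/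
/-!
Group the pairs `(r, r₁)` by `l = ⌊√(r² + r₁²) c - (m + 1)⌋`. The `l`-th shell lies in the annulus
of radii `(l + m + 1)/c ≤ ρ ≤ (l + m + 2)/c`; comparing the unit squares of its lattice points with
the area of that annulus bounds its size by `π (2√2 + 1/c)² · 3(m + 1)(l + 1)/c`, and every term in
it is at most `(r₁ + 1) F(l) ≤ 3(m + 1)(l + 1)/c · F(l)` by monotonicity of `F`. Summing over `l`
gives the constant times `Σ (l + 1)² F(l)`.
-/

open MeasureTheory Metric Finset Function

def unitSquare (p : ℕ × ℕ) : Set ℂ :=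
  {z | z.re ∈ Set.Ico (p.1 : ℝ) (p.1 + 1) ∧ z.im ∈ Set.Ico (p.2 : ℝ) (p.2 + 1)}

lemma unitSquare_eq_preimage (p : ℕ × ℕ) :
    unitSquare p = Complex.measurableEquivRealProd ⁻¹'
      (Set.Ico (p.1 : ℝ) (p.1 + 1) ×ˢ Set.Ico (p.2 : ℝ) (p.2 + 1)) := rfl

lemma measurableSet_unitSquare (p : ℕ × ℕ) : MeasurableSet (unitSquare p) :=
  (measurableSet_Ico.prod measurableSet_Ico).preimage Complex.measurableEquivRealProd.measurable

lemma volume_unitSquare (p : ℕ × ℕ) : volume (unitSquare p) = 1 := by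
  rw [unitSquare_eq_preimage, Complex.volume_preserving_equiv_real_prod.measure_preimage
      (measurableSet_Ico.prod measurableSet_Ico).nullMeasurableSet,
    Measure.volume_eq_prod, Measure.prod_prod, Real.volume_Ico, Real.volume_Ico]
  simp

lemma floor_re_im_of_mem_unitSquare {p : ℕ × ℕ} {z : ℂ} (hz : z ∈ unitSquare p) :
    (⌊z.re⌋₊, ⌊z.im⌋₊) = p := by
  obtain ⟨⟨hre, hre'⟩, him, him'⟩ := hz
  have hre0 : 0 ≤ z.re := (Nat.cast_nonneg _).trans hre
  have him0 : 0 ≤ z.im := (Nat.cast_nonneg _).trans him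
  ext
  · exact (Nat.floor_eq_iff hre0).2 ⟨hre, hre'⟩
  · exact (Nat.floor_eq_iff him0).2 ⟨him, him'⟩

lemma pairwise_disjoint_unitSquare : Pairwise (Disjoint on unitSquare) := fun _ _ hpq =>
  Set.disjoint_left.2 fun _ hp hq =>
    hpq ((floor_re_im_of_mem_unitSquare hp).symm.trans (floor_re_im_of_mem_unitSquare hq))

lemma sqrt_le_norm_of_mem_unitSquare {p : ℕ × ℕ} {z : ℂ} (hz : z ∈ unitSquare p) :
    √((p.1 : ℝ) ^ 2 + (p.2 : ℝ) ^ 2) ≤ ‖z‖ := by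
  obtain ⟨⟨hre, -⟩, him, -⟩ := hz
  rw [Complex.norm_eq_sqrt_sq_add_sq]
  gcongr

lemma norm_le_sqrt_add_of_mem_unitSquare {p : ℕ × ℕ} {z : ℂ} (hz : z ∈ unitSquare p) :
    ‖z‖ ≤ √((p.1 : ℝ) ^ 2 + (p.2 : ℝ) ^ 2) + √2 := by
  obtain ⟨⟨hre, hre'⟩, him, him'⟩ := hz
  set corner : ℂ := ⟨p.1, p.2⟩
  have hcorner : ‖corner‖ = √((p.1 : ℝ) ^ 2 + (p.2 : ℝ) ^ 2) := Complex.norm_eq_sqrt_sq_add_sq _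
  have hoffset : ‖z - corner‖ ≤ √2 := by
    refine (Complex.norm_le_sqrt_two_mul_max _).trans (mul_le_of_le_one_right (by positivity) ?_)
    simp only [Complex.sub_re, Complex.sub_im, corner]
    exact max_le (abs_le.2 ⟨by linarith, by linarith⟩) (abs_le.2 ⟨by linarith, by linarith⟩)
  calc ‖z‖ ≤ ‖corner‖ + ‖z - corner‖ := norm_le_norm_add_norm_sub' z corner
    _ ≤ _ := by rw [hcorner]; gcongr

lemma Complex.volume_closedBall_diff_ball {r R : ℝ} (hr : 0 ≤ r) (hrR : r ≤ R) :
    volume (closedBall (0 : ℂ) R \ ball 0 r) = ENNReal.ofReal (Real.pi * (R ^ 2 - r ^ 2)) := by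
  rw [measure_sdiff (ball_subset_closedBall.trans (closedBall_subset_closedBall hrR))
      measurableSet_ball.nullMeasurableSet measure_ball_lt_top.ne,
    Complex.volume_ball, Complex.volume_closedBall, ← ENNReal.ofReal_coe_nnreal,
    NNReal.coe_real_pi, ← ENNReal.ofReal_pow hr, ← ENNReal.ofReal_pow (hr.trans hrR),
    ← ENNReal.ofReal_mul (by positivity), ← ENNReal.ofReal_mul (by positivity),
    ← ENNReal.ofReal_sub _ (by positivity), mul_comm _ Real.pi, mul_comm _ Real.pi, mul_sub]

-- Each unit square of a lattice point of the annulus lies in the annulus widened by `√2`.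
lemma card_le_pi_mul_of_sqrt_mem_Icc {r R : ℝ} (hr : 0 ≤ r) (hrR : r ≤ R) (T : Finset (ℕ × ℕ))
    (hT : ∀ p ∈ T, √((p.1 : ℝ) ^ 2 + (p.2 : ℝ) ^ 2) ∈ Set.Icc r R) :
    (#T : ℝ) ≤ Real.pi * ((R + √2) ^ 2 - r ^ 2) := by
  have hsub : ∀ p ∈ T, unitSquare p ⊆ closedBall (0 : ℂ) (R + √2) \ ball 0 r := fun p hp z hz => by
    have hnorm := sqrt_le_norm_of_mem_unitSquare hz
    have hnorm' := norm_le_sqrt_add_of_mem_unitSquare hz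
    simp only [Set.mem_sdiff, mem_closedBall, mem_ball, dist_zero_right, not_lt]
    exact ⟨by linarith [(hT p hp).2], (hT p hp).1.trans hnorm⟩
  have hvol : (#T : ENNReal) ≤ ENNReal.ofReal (Real.pi * ((R + √2) ^ 2 - r ^ 2)) :=
    calc (#T : ENNReal) = ∑ p ∈ T, volume (unitSquare p) := by simp [volume_unitSquare]
      _ = volume (⋃ p ∈ T, unitSquare p) :=
        (measure_biUnion_finset (pairwise_disjoint_unitSquare.set_pairwise _)
          fun p _ => measurableSet_unitSquare p).symm
      _ ≤ volume (closedBall (0 : ℂ) (R + √2) \ ball 0 r) := measure_mono (Set.iUnion₂_subset hsub)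
      _ = _ := Complex.volume_closedBall_diff_ball hr (by linarith [Real.sqrt_nonneg 2])
  rw [← ENNReal.ofReal_natCast] at hvol
  refine (ENNReal.ofReal_le_ofReal_iff ?_).1 hvol
  have : r ^ 2 ≤ (R + √2) ^ 2 := by gcongr; linarith [Real.sqrt_nonneg 2]
  nlinarith [Real.pi_pos]

lemma sq_add_sqrt_two_sub_sq_le {r u : ℝ} (hr : 0 ≤ r) (hu : 1 ≤ u) :
    (r + u + √2) ^ 2 - r ^ 2 ≤ (2 * √2 + u) ^ 2 * (r + 1) := by
  have hs : √2 ^ 2 = 2 := Real.sq_sqrt zero_le_two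
  have hs0 : 0 ≤ √2 := Real.sqrt_nonneg 2
  nlinarith [mul_nonneg hr hs0, mul_nonneg hr (sub_nonneg.2 hu), mul_nonneg hs0 (sub_nonneg.2 hu),
    mul_nonneg (mul_nonneg hr hs0) (sub_nonneg.2 hu), mul_nonneg hr (sq_nonneg (u - 1))]

lemma tsum_le_tsum_of_sum_fiber_le {α β : Type*} {f : α → ℝ} {g : β → ℝ} (L : α → β)
    (hf : 0 ≤ f) (hg : 0 ≤ g) (hgs : Summable g)
    (hfiber : ∀ b (U : Finset α), (∀ a ∈ U, L a = b) → ∑ a ∈ U, f a ≤ g b) :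
    ∑' a, f a ≤ ∑' b, g b := by
  classical
  have hfinite : ∀ S : Finset α, ∑ a ∈ S, f a ≤ ∑' b, g b := fun S =>
    calc ∑ a ∈ S, f a = ∑ b ∈ S.image L, ∑ a ∈ S with L a = b, f a :=
          (sum_fiberwise_of_maps_to (fun a ha => mem_image_of_mem L ha) f).symm
      _ ≤ ∑ b ∈ S.image L, g b := sum_le_sum fun b _ => hfiber b _ fun a ha => (mem_filter.1 ha).2
      _ ≤ ∑' b, g b := hgs.sum_le_tsum _ fun b _ => hg b
  exact (summable_of_sum_le hf hfinite).tsum_le_of_sum_le hfinite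

lemma sum_mul_le_of_mem_shell {F : ℝ → ℝ} {m l : ℕ} {c : ℝ} (hF0 : ∀ x, 0 ≤ x → 0 ≤ F x)
    (hFanti : AntitoneOn F (Set.Ici 0)) (hc0 : 0 < c) (hc1 : c ≤ 1) (U : Finset (ℕ × ℕ))
    (hU : ∀ p ∈ U, √((p.2 : ℝ) ^ 2 + (p.1 : ℝ) ^ 2) * c - ((m : ℝ) + 1) ∈ Set.Ico (l : ℝ) (l + 1)) :
    ∑ p ∈ U, ((p.1 : ℝ) + 1) * F (√((p.2 : ℝ) ^ 2 + (p.1 : ℝ) ^ 2) * c - ((m : ℝ) + 1))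
      ≤ (3 / c) ^ 2 * (2 * √2 + 1 / c) ^ 2 * Real.pi * ((m : ℝ) + 1) ^ 2 *
        (((l : ℝ) + 1) ^ 2 * F l) := by
  set r : ℝ := (l + m + 1) / c
  set N : ℝ := 3 * ((m : ℝ) + 1) * ((l : ℝ) + 1) / c
  have hu : 1 ≤ 1 / c := by rw [le_div_iff₀ hc0]; linarith
  have hradius : ∀ p ∈ U, √((p.2 : ℝ) ^ 2 + (p.1 : ℝ) ^ 2) ∈ Set.Icc r (r + 1 / c) := by
    intro p hp
    obtain ⟨hlow, hup⟩ := hU p hp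
    constructor
    · rw [div_le_iff₀ hc0]; linarith
    · rw [show r + 1 / c = (l + m + 2) / c by ring, le_div_iff₀ hc0]; linarith
  have hrN : r + 1 / c + 1 ≤ N := by
    rw [show r + 1 / c + 1 = (l + m + 2 + c) / c by simp only [r]; field_simp; ring]
    refine div_le_div_of_nonneg_right ?_ hc0.le
    nlinarith [(Nat.cast_nonneg m : (0 : ℝ) ≤ m), (Nat.cast_nonneg l : (0 : ℝ) ≤ l)]
  have hterm : ∀ p ∈ U,
      ((p.1 : ℝ) + 1) * F (√((p.2 : ℝ) ^ 2 + (p.1 : ℝ) ^ 2) * c - ((m : ℝ) + 1)) ≤ N * F l := by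
    intro p hp
    have hl0 : (0 : ℝ) ≤ l := l.cast_nonneg
    have hp1 : (p.1 : ℝ) ≤ √((p.2 : ℝ) ^ 2 + (p.1 : ℝ) ^ 2) :=
      Real.le_sqrt_of_sq_le (le_add_of_nonneg_left (sq_nonneg _))
    have hF : F (√((p.2 : ℝ) ^ 2 + (p.1 : ℝ) ^ 2) * c - ((m : ℝ) + 1)) ≤ F l :=
      hFanti (Set.mem_Ici.2 hl0) (Set.mem_Ici.2 (hl0.trans (hU p hp).1)) (hU p hp).1
    gcongr
    · exact hF0 _ (hl0.trans (hU p hp).1)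
    · linarith [(hradius p hp).2]
  have hcard : (#U : ℝ) ≤ Real.pi * (2 * √2 + 1 / c) ^ 2 * N := by
    rw [← card_image_of_injective U Prod.swap_injective, mul_assoc]
    refine (card_le_pi_mul_of_sqrt_mem_Icc (r := r) (R := r + 1 / c) (by positivity)
      (by linarith) _ ?_).trans ?_
    · simp only [mem_image]
      rintro _ ⟨p, hp, rfl⟩
      exact hradius p hp
    · gcongr
      exact (sq_add_sqrt_two_sub_sq_le (by positivity) hu).trans (by gcongr; linarith)
  calc _ ≤ #U • (N * F l) := sum_le_card_nsmul U _ _ hterm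
    _ ≤ (Real.pi * (2 * √2 + 1 / c) ^ 2 * N) * (N * F l) := by
        rw [nsmul_eq_mul]
        gcongr
        exact mul_nonneg (by positivity) (hF0 _ l.cast_nonneg)
    _ = _ := by simp only [N]; field_simp

/-- Weighted double lattice sum bound: for `F` non-increasing and positive with
`κ_{1,2} = Σ (l+1)²F(l) < ∞`, every `m ∈ ℤ_{≥0}` and `0 < c ≤ 1`,
`Σ_{r₁,r : √(r²+r₁²)c ≥ m+1} (r₁+1)·F(√(r²+r₁²)c − (m+1))
  ≤ (3/c)²(2√2 + 1/c)²·π·(m+1)²·κ_{1,2}`. -/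
theorem stmt12 (F : ℝ → ℝ)
    (hFpos : ∀ x : ℝ, 0 ≤ x → 0 < F x)
    (hFanti : AntitoneOn F (Set.Ici 0))
    (hsum : Summable (fun l : ℕ => ((l : ℝ) + 1) ^ 2 * F l))
    (m : ℕ) (c : ℝ) (hc0 : 0 < c) (hc1 : c ≤ 1) :
    (∑' p : ℕ × ℕ,
        if ((m : ℝ) + 1) ≤ Real.sqrt ((p.2 : ℝ) ^ 2 + (p.1 : ℝ) ^ 2) * c
        then ((p.1 : ℝ) + 1) *
          F (Real.sqrt ((p.2 : ℝ) ^ 2 + (p.1 : ℝ) ^ 2) * c - ((m : ℝ) + 1))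
        else 0)
      ≤ (3 / c) ^ 2 * (2 * Real.sqrt 2 + 1 / c) ^ 2 * Real.pi * ((m : ℝ) + 1) ^ 2 *
        ∑' l : ℕ, ((l : ℝ) + 1) ^ 2 * F l := by
  have hF0 : ∀ x, 0 ≤ x → 0 ≤ F x := fun x hx => (hFpos x hx).le
  rw [← tsum_mul_left]
  refine tsum_le_tsum_of_sum_fiber_le
    (fun p : ℕ × ℕ => ⌊√((p.2 : ℝ) ^ 2 + (p.1 : ℝ) ^ 2) * c - ((m : ℝ) + 1)⌋₊)
    (fun p => ?_) (fun l => ?_) (hsum.mul_left _) fun l U hU => ?_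
  · split_ifs with h
    · exact mul_nonneg (by positivity) (hF0 _ (by linarith))
    · exact le_rfl
  · exact mul_nonneg (by positivity) (mul_nonneg (by positivity) (hF0 _ l.cast_nonneg))
  · rw [← sum_filter]
    refine sum_mul_le_of_mem_shell hF0 hFanti hc0 hc1 _ fun p hp => ?_
    obtain ⟨hpU, hshell⟩ := mem_filter.1 hp
    rw [← hU p hpU]
    exact ⟨Nat.floor_le (by linarith), Nat.lt_floor_add_one _⟩
end
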